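/- Let P, Q be weakly compact convex sets of probability measures on a Polish space X. Then KL(P‖Q) = 0 and KL(Q‖P) = 0 if and only if P = Q. -/

import Mathlib

open MeasureTheory Real ENNReal Filter Topology
open scoped Classical

noncomputable def klDiv {X : Type*} [MeasurableSpace X] (μ ν : Measure X) : EReal :=
  if μ ≪ ν ∧ Integrable (fun x => Real.log (μ.rnDeriv ν x).toReal) μ
  then ((∫ x, Real.log (μ.rnDeriv ν x).toReal ∂μ : ℝ) : EReal)
  else ⊤

noncomputable def tvDist {X : Type*} [MeasurableSpace X] (μ ν : Measure X) : ℝ :=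
  ⨆ A : {A : Set X // MeasurableSet A}, |(μ A).toReal - (ν A).toReal|


noncomputable def genKL {X : Type*} [MeasurableSpace X]
    (P Q : Set (ProbabilityMeasure X)) : EReal :=
  ⨆ μ ∈ P, ⨅ ν ∈ Q, klDiv μ.toMeasure ν.toMeasure

noncomputable def genV {X : Type*} [MeasurableSpace X]
    (P Q : Set (ProbabilityMeasure X)) : ℝ :=
  max (⨆ μ : P, ⨅ ν : Q, tvDist μ.1.toMeasure ν.1.toMeasure)
      (⨆ ν : Q, ⨅ μ : P, tvDist μ.1.toMeasure ν.1.toMeasure)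

def ConvexPM {X : Type*} [MeasurableSpace X] (P : Set (ProbabilityMeasure X)) : Prop :=
  ∀ μ ∈ P, ∀ ν ∈ P, ∀ a b : ℝ≥0∞, a + b = 1 →
    ∃ κ ∈ P, κ.toMeasure = a • μ.toMeasure + b • ν.toMeasure

def midSet {X : Type*} [MeasurableSpace X]
    (P Q : Set (ProbabilityMeasure X)) : Set (ProbabilityMeasure X) :=
  {κ | ∃ μ ∈ P, ∃ ν ∈ Q, κ.toMeasure = (2:ℝ≥0∞)⁻¹ • μ.toMeasure + (2:ℝ≥0∞)⁻¹ • ν.toMeasure}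

noncomputable def genJS {X : Type*} [MeasurableSpace X]
    (P Q : Set (ProbabilityMeasure X)) : EReal :=
  ((1/2 : ℝ) : EReal) * genKL P (midSet P Q) + ((1/2 : ℝ) : EReal) * genKL Q (midSet P Q)


/-! If `KL(P‖Q) = 0`, every `μ ∈ P` is the limit of measures `νₙ ∈ Q` with `KL(μ‖νₙ) → 0`.
The Donsker–Varadhan inequality applied to `t • f`, together with `exp s ≤ 1 + s + s²` for
`|s| ≤ 1` and an optimal choice of `t`, gives `|∫ f ∂μ - ∫ f ∂ν| ≤ 2 ‖f‖ √KL(μ‖ν)` for bounded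
continuous `f`. Hence `νₙ → μ` weakly, and `μ ∈ Q` because `Q` is compact, hence closed in the
Hausdorff weak topology. Conversely `KL(P‖P) = 0` since `KL(μ‖μ) = 0` and `KL ≥ 0`. -/

open scoped BoundedContinuousFunction
open InformationTheory (klDiv_ne_top_iff klDiv_eq_top_iff klDiv_self
  toReal_klDiv_of_measure_eq)

section KullbackLeibler

variable {X : Type*} [MeasurableSpace X] {μ ν : Measure X}

lemma integral_llr_nonneg [IsProbabilityMeasure μ] [IsProbabilityMeasure ν] (hμν : μ ≪ ν) :
    0 ≤ ∫ x, llr μ ν x ∂μ := by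
  rw [← toReal_klDiv_of_measure_eq hμν (by simp)]
  exact ENNReal.toReal_nonneg

lemma klDiv_eq_coe_klDiv [IsProbabilityMeasure μ] [IsProbabilityMeasure ν] :
    klDiv μ ν = (InformationTheory.klDiv μ ν : EReal) := by
  rw [klDiv]
  split_ifs with h
  · rw [← ENNReal.ofReal_toReal (klDiv_ne_top_iff.2 h), toReal_klDiv_of_measure_eq h.1 (by simp),
      EReal.coe_ennreal_ofReal, max_eq_left (integral_llr_nonneg h.1)]
    rfl
  · rw [klDiv_eq_top_iff.2 fun hac hint => h ⟨hac, hint⟩, EReal.coe_ennreal_top]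

/-- The Donsker–Varadhan inequality, from Gibbs' inequality for `μ` against `ν` tilted by `g`. -/
lemma integral_le_integral_llr_add_log_integral_exp [IsProbabilityMeasure μ]
    [IsProbabilityMeasure ν] (hμν : μ ≪ ν) (hllr : Integrable (llr μ ν) μ) {g : X → ℝ}
    (hgμ : Integrable g μ) (hgν : Integrable (fun x => Real.exp (g x)) ν) :
    ∫ x, g x ∂μ ≤ ∫ x, llr μ ν x ∂μ + Real.log (∫ x, Real.exp (g x) ∂ν) := by
  have : IsProbabilityMeasure (ν.tilted g) := isProbabilityMeasure_tilted hgν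
  have hgibbs := integral_llr_nonneg (hμν.trans (absolutelyContinuous_tilted hgν))
  rw [integral_llr_tilted_right hμν hgμ hgν hllr] at hgibbs
  linarith

lemma integrable_exp_of_abs_le [IsFiniteMeasure ν] {g : X → ℝ} {c : ℝ}
    (hg : AEStronglyMeasurable g ν) (hgc : ∀ x, |g x| ≤ c) :
    Integrable (fun x => Real.exp (g x)) ν :=
  .of_bound (Real.continuous_exp.comp_aestronglyMeasurable hg) (Real.exp c) (.of_forall fun x => by
    rw [Real.norm_eq_abs, abs_of_pos (Real.exp_pos _)]
    exact Real.exp_le_exp.2 ((le_abs_self _).trans (hgc x)))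

lemma log_integral_exp_le [IsProbabilityMeasure ν] {g : X → ℝ} {c : ℝ}
    (hg : AEStronglyMeasurable g ν) (hgc : ∀ x, |g x| ≤ c) (hc : c ≤ 1) :
    Real.log (∫ x, Real.exp (g x) ∂ν) ≤ ∫ x, g x ∂ν + c ^ 2 := by
  have hgi : Integrable g ν :=
    .of_bound hg c (.of_forall fun x => (Real.norm_eq_abs _).trans_le (hgc x))
  have hexp := integrable_exp_of_abs_le hg hgc
  have hpoint : ∀ x, Real.exp (g x) ≤ g x + (1 + c ^ 2) := fun x => by
    have h1 := abs_le.1 (Real.abs_exp_sub_one_sub_id_le ((hgc x).trans hc))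
    have h2 : g x ^ 2 ≤ c ^ 2 := sq_le_sq' (abs_le.1 (hgc x)).1 (abs_le.1 (hgc x)).2
    linarith
  calc Real.log (∫ x, Real.exp (g x) ∂ν)
      ≤ ∫ x, Real.exp (g x) ∂ν - 1 := Real.log_le_sub_one_of_pos (integral_exp_pos hexp)
    _ ≤ ∫ x, (g x + (1 + c ^ 2)) ∂ν - 1 :=
        sub_le_sub_right (integral_mono hexp (hgi.add (integrable_const _)) hpoint) 1
    _ = ∫ x, g x ∂ν + c ^ 2 := by
        rw [integral_add hgi (integrable_const _)]
        simp only [integral_const, probReal_univ, smul_eq_mul, one_mul]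
        ring

end KullbackLeibler

lemma le_two_mul_mul_sqrt_of_forall_mul_le {D K M : ℝ} (hM : 0 < M) (hK : 0 ≤ K)
    (hD : D ≤ 2 * M) (h : ∀ t, 0 < t → t * M ≤ 1 → t * D ≤ K + t ^ 2 * M ^ 2) :
    D ≤ 2 * M * √K := by
  rcases le_or_gt 1 K with hK1 | hK1
  · nlinarith [Real.one_le_sqrt.2 hK1]
  rcases hK.eq_or_lt with rfl | hK0
  · by_contra! hDpos
    rw [Real.sqrt_zero, mul_zero] at hDpos
    set t := min (1 / M) (D / (2 * M ^ 2))
    have ht : 0 < t := lt_min (by positivity) (by positivity)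
    have htM : t * M ≤ 1 := by
      calc t * M ≤ 1 / M * M := by gcongr; exact min_le_left _ _
        _ = 1 := by field_simp
    have htD : t * M ^ 2 ≤ D / 2 := by
      calc t * M ^ 2 ≤ D / (2 * M ^ 2) * M ^ 2 := by gcongr; exact min_le_right _ _
        _ = D / 2 := by field_simp
    nlinarith [h t ht htM]
  · have hsK : 0 < √K := Real.sqrt_pos.2 hK0
    have hs1 : √K ≤ 1 := Real.sqrt_le_one.mpr hK1.le
    have := h (√K / M) (by positivity) (by field_simp; exact hs1)
    rw [div_pow, Real.sq_sqrt hK, div_mul_cancel₀ _ (by positivity)] at this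
    rw [div_mul_eq_mul_div, div_le_iff₀ hM] at this
    nlinarith [Real.mul_self_sqrt hK]

section BoundedContinuous

variable {X : Type*} [MeasurableSpace X] [TopologicalSpace X] [OpensMeasurableSpace X]
  {μ ν : Measure X} [IsProbabilityMeasure μ] [IsProbabilityMeasure ν]

lemma mul_integral_sub_integral_le (hμν : μ ≪ ν) (hllr : Integrable (llr μ ν) μ)
    (f : X →ᵇ ℝ) {t : ℝ} (ht : 0 ≤ t) (htf : t * ‖f‖ ≤ 1) :
    t * (∫ x, f x ∂μ - ∫ x, f x ∂ν) ≤ ∫ x, llr μ ν x ∂μ + t ^ 2 * ‖f‖ ^ 2 := by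
  have htf_le : ∀ x, |t * f x| ≤ t * ‖f‖ := fun x => by
    rw [abs_mul, abs_of_nonneg ht, ← Real.norm_eq_abs]
    exact mul_le_mul_of_nonneg_left (f.norm_coe_le_norm x) ht
  have htf_meas : AEStronglyMeasurable (fun x => t * f x) ν :=
    (continuous_const.mul f.continuous).aestronglyMeasurable
  have hdv := integral_le_integral_llr_add_log_integral_exp hμν hllr
    ((f.integrable μ).const_mul t) (integrable_exp_of_abs_le htf_meas htf_le)
  have hlog := log_integral_exp_le htf_meas htf_le htf
  rw [integral_const_mul] at hdv hlog
  rw [mul_pow] at hlog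
  linarith

lemma integral_sub_integral_le_two_mul_sqrt (h : InformationTheory.klDiv μ ν ≠ ∞)
    (f : X →ᵇ ℝ) :
    ∫ x, f x ∂μ - ∫ x, f x ∂ν ≤ 2 * ‖f‖ * √(InformationTheory.klDiv μ ν).toReal := by
  obtain ⟨hμν, hllr⟩ := klDiv_ne_top_iff.1 h
  rcases (norm_nonneg f).eq_or_lt with hf | hf
  · obtain rfl : f = 0 := norm_eq_zero.1 hf.symm
    simp
  rw [toReal_klDiv_of_measure_eq hμν (by simp)]
  refine le_two_mul_mul_sqrt_of_forall_mul_le hf (integral_llr_nonneg hμν) ?_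
    fun t ht htf => mul_integral_sub_integral_le hμν hllr f ht.le htf
  have hμf := abs_le.1 (f.norm_integral_le_norm μ)
  have hνf := abs_le.1 (f.norm_integral_le_norm ν)
  linarith

lemma abs_integral_sub_integral_le_two_mul_sqrt (h : InformationTheory.klDiv μ ν ≠ ∞)
    (f : X →ᵇ ℝ) :
    |∫ x, f x ∂μ - ∫ x, f x ∂ν| ≤ 2 * ‖f‖ * √(InformationTheory.klDiv μ ν).toReal := by
  refine abs_sub_le_iff.2 ⟨integral_sub_integral_le_two_mul_sqrt h f, ?_⟩
  simpa [integral_neg, sub_neg_eq_add, neg_add_eq_sub] using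
    integral_sub_integral_le_two_mul_sqrt h (-f)

lemma ProbabilityMeasure.tendsto_of_tendsto_klDiv_zero {ι : Type*} {l : Filter ι}
    {μ : ProbabilityMeasure X} {ν : ι → ProbabilityMeasure X}
    (h : Tendsto (fun i => InformationTheory.klDiv (μ : Measure X) (ν i)) l (𝓝 0)) :
    Tendsto ν l (𝓝 μ) := by
  refine ProbabilityMeasure.tendsto_iff_forall_integral_tendsto.2 fun f => ?_
  rw [tendsto_iff_norm_sub_tendsto_zero]
  have hbound : Tendsto
      (fun i => 2 * ‖f‖ * √(InformationTheory.klDiv (μ : Measure X) (ν i)).toReal) l (𝓝 0) := by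
    simpa using ((ENNReal.tendsto_toReal ENNReal.zero_ne_top).comp h).sqrt.const_mul (2 * ‖f‖)
  refine squeeze_zero' (.of_forall fun _ => norm_nonneg _) ?_ hbound
  filter_upwards [h.eventually_ne ENNReal.zero_ne_top] with i hi
  rw [Real.norm_eq_abs, abs_sub_comm]
  exact abs_integral_sub_integral_le_two_mul_sqrt hi f

end BoundedContinuous

section GenKL

variable {X : Type*} [MeasurableSpace X] {P Q : Set (ProbabilityMeasure X)}

lemma iInf_klDiv_le_genKL {μ : ProbabilityMeasure X} (hμ : μ ∈ P) :
    ⨅ ν ∈ Q, klDiv (μ : Measure X) ν ≤ genKL P Q :=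
  le_iSup₂ (f := fun μ (_ : μ ∈ P) => ⨅ ν ∈ Q, klDiv (μ : Measure X) ν) μ hμ

lemma genKL_nonneg (hP : P.Nonempty) : 0 ≤ genKL P Q := by
  obtain ⟨μ, hμ⟩ := hP
  refine le_trans (le_iInf₂ fun ν _ => ?_) (iInf_klDiv_le_genKL hμ)
  rw [klDiv_eq_coe_klDiv]
  exact EReal.coe_ennreal_nonneg _

lemma genKL_self (hP : P.Nonempty) : genKL P P = 0 := by
  refine le_antisymm (iSup₂_le fun μ hμ => (iInf₂_le μ hμ).trans_eq ?_) (genKL_nonneg hP)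
  rw [klDiv_eq_coe_klDiv, klDiv_self, EReal.coe_ennreal_zero]

lemma exists_klDiv_lt_of_genKL_eq_zero (h : genKL P Q = 0) {μ : ProbabilityMeasure X}
    (hμ : μ ∈ P) {ε : ℝ≥0∞} (hε : 0 < ε) :
    ∃ ν ∈ Q, InformationTheory.klDiv (μ : Measure X) ν < ε := by
  have hinf : ⨅ ν ∈ Q, klDiv (μ : Measure X) ν < (ε : EReal) := by
    refine (iInf_klDiv_le_genKL hμ).trans_lt ?_
    rwa [h, EReal.coe_ennreal_pos]
  simpa only [iInf_lt_iff, klDiv_eq_coe_klDiv, EReal.coe_ennreal_lt_coe_ennreal_iff,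
    exists_prop] using hinf

lemma subset_of_genKL_eq_zero [TopologicalSpace X] [OpensMeasurableSpace X] (hQ : IsClosed Q)
    (h : genKL P Q = 0) : P ⊆ Q := by
  intro μ hμ
  choose ν hνQ hν using fun n : ℕ =>
    exists_klDiv_lt_of_genKL_eq_zero h hμ (ENNReal.inv_pos.2 (ENNReal.natCast_ne_top n))
  have hlim : Tendsto (fun n => InformationTheory.klDiv (μ : Measure X) (ν n)) atTop (𝓝 0) :=
    tendsto_of_tendsto_of_tendsto_of_le_of_le tendsto_const_nhds
      ENNReal.tendsto_inv_nat_nhds_zero (fun _ => zero_le) fun n => (hν n).le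
  exact hQ.mem_of_tendsto (ProbabilityMeasure.tendsto_of_tendsto_klDiv_zero hlim)
    (.of_forall hνQ)

end GenKL

theorem genKL_both_zero_iff_eq_general {X : Type*} [MeasurableSpace X] [TopologicalSpace X]
    [PolishSpace X] [BorelSpace X] (P Q : Set (ProbabilityMeasure X))
    (hPne : P.Nonempty) (hPc : IsCompact P) (hQc : IsCompact Q) :
    (genKL P Q = 0 ∧ genKL Q P = 0) ↔ P = Q := by
  refine ⟨fun ⟨hPQ, hQP⟩ => ?_, ?_⟩
  · exact (subset_of_genKL_eq_zero hQc.isClosed hPQ).antisymm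
      (subset_of_genKL_eq_zero hPc.isClosed hQP)
  · rintro rfl
    exact ⟨genKL_self hPne, genKL_self hPne⟩

theorem genKL_both_zero_iff_eq {X : Type*} [MeasurableSpace X] [TopologicalSpace X]
    [PolishSpace X] [BorelSpace X] (P Q : Set (ProbabilityMeasure X))
    (hPne : P.Nonempty) (hQne : Q.Nonempty) (hPc : IsCompact P) (hQc : IsCompact Q)
    (hPconv : ConvexPM P) (hQconv : ConvexPM Q) :
    (genKL P Q = 0 ∧ genKL Q P = 0) ↔ P = Q :=
  genKL_both_zero_iff_eq_general P Q hPne hPc hQc
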